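/- (Theorem 1) Let g : ℝ^N → ℝ be a fully-connected neural network with L layers: a^(0)(x) = x, a^(l)(x) = σ(W^(l) a^(l−1)(x)) applied componentwise for l = 1,…,L, with scalar output g(x) = a^(L)(x) (the last layer has width 1). Suppose the activation function σ : ℝ → ℝ is twice differentiable with |σ'(t)| ≤ Σ₁ and |σ''(t)| ≤ Σ₂ for all t ∈ ℝ. Then the Frobenius norm of the Hessian of g is bounded by ‖H(g)(x)‖_F ≤ Σ_{m=1}^{L} ( Π_{l=1}^{m} ‖W^(l)‖_F² · Π_{l=m+1}^{L} ‖W^(l)‖_F ) · Σ₁^{L+m−2} · Σ₂, for all x ∈ ℝ^N. -/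

import Mathlib

/-- The `l`-th layer activation `a^(l)` of a fully-connected network with
componentwise activation `σ` and weight matrices `W`: `a^(0)(x) = x`,
`a^(l+1)(x) = σ(W^(l+1) a^(l)(x))`. -/
noncomputable def layerAct (σ : ℝ → ℝ) (n : ℕ → ℕ)
    (W : ∀ l, Matrix (Fin (n (l + 1))) (Fin (n l)) ℝ) :
    ∀ l, (Fin (n 0) → ℝ) → Fin (n l) → ℝ
  | 0 => fun x => x
  | l + 1 => fun x i => σ (((W l).mulVec (layerAct σ n W l x)) i)

/-- Frobenius norm of a real matrix. -/
noncomputable def frobNorm {m k : ℕ} (A : Matrix (Fin m) (Fin k) ℝ) : ℝ :=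
  Real.sqrt (∑ i, ∑ j, (A i j) ^ 2)

section helpers

lemma sqrt_sum_sq_add {ι : Type*} (s : Finset ι) (a b : ι → ℝ) :
    Real.sqrt (∑ i ∈ s, (a i + b i)^2) ≤
      Real.sqrt (∑ i ∈ s, a i ^2) + Real.sqrt (∑ i ∈ s, b i ^2) := by
  have hA : (0:ℝ) ≤ ∑ i ∈ s, a i ^2 := Finset.sum_nonneg fun i _ => sq_nonneg _
  have hB : (0:ℝ) ≤ ∑ i ∈ s, b i ^2 := Finset.sum_nonneg fun i _ => sq_nonneg _
  have hCS : ∑ i ∈ s, a i * b i ≤ Real.sqrt (∑ i ∈ s, a i ^2) * Real.sqrt (∑ i ∈ s, b i ^2) := by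
    have h1 := Finset.sum_mul_sq_le_sq_mul_sq s a b
    calc ∑ i ∈ s, a i * b i ≤ |∑ i ∈ s, a i * b i| := le_abs_self _
      _ = Real.sqrt ((∑ i ∈ s, a i * b i)^2) := (Real.sqrt_sq_eq_abs _).symm
      _ ≤ Real.sqrt ((∑ i ∈ s, a i ^2) * (∑ i ∈ s, b i ^2)) := Real.sqrt_le_sqrt h1
      _ = _ := Real.sqrt_mul hA _
  have key : ∑ i ∈ s, (a i + b i)^2 ≤
      (Real.sqrt (∑ i ∈ s, a i ^2) + Real.sqrt (∑ i ∈ s, b i ^2))^2 := by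
    have expand : ∑ i ∈ s, (a i + b i)^2
        = (∑ i ∈ s, a i ^2) + 2 * (∑ i ∈ s, a i * b i) + (∑ i ∈ s, b i ^2) := by
      simp_rw [add_sq]
      rw [Finset.sum_add_distrib, Finset.sum_add_distrib, Finset.mul_sum]
      ring_nf
    rw [expand, add_sq, Real.sq_sqrt hA, Real.sq_sqrt hB]
    nlinarith [hCS]
  calc Real.sqrt (∑ i ∈ s, (a i + b i)^2)
      ≤ Real.sqrt ((Real.sqrt (∑ i ∈ s, a i ^2) + Real.sqrt (∑ i ∈ s, b i ^2))^2) :=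
        Real.sqrt_le_sqrt key
    _ = _ := Real.sqrt_sq (by positivity)

lemma sqrt_sum_sq_le_sum {ι : Type*} (s : Finset ι) (f : ι → ℝ) (hf : ∀ i ∈ s, 0 ≤ f i) :
    Real.sqrt (∑ i ∈ s, f i ^2) ≤ ∑ i ∈ s, f i := by
  have h : ∑ i ∈ s, f i ^2 ≤ (∑ i ∈ s, f i)^2 := by
    rw [sq, Finset.mul_sum]
    refine Finset.sum_le_sum fun i hi => ?_
    rw [sq]
    exact mul_le_mul_of_nonneg_right (Finset.single_le_sum hf hi) (hf i hi)
  calc Real.sqrt (∑ i ∈ s, f i ^2) ≤ Real.sqrt ((∑ i ∈ s, f i)^2) := Real.sqrt_le_sqrt h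
    _ = _ := Real.sqrt_sq (Finset.sum_nonneg hf)

end helpers

noncomputable def Dmap (σ : ℝ → ℝ) (n : ℕ → ℕ)
    (W : ∀ l, Matrix (Fin (n (l + 1))) (Fin (n l)) ℝ) :
    ∀ l, (Fin (n 0) → ℝ) → Fin (n l) → ((Fin (n 0) → ℝ) →L[ℝ] ℝ)
  | 0 => fun _ p => ContinuousLinearMap.proj p
  | l + 1 => fun x p =>
      deriv σ (((W l).mulVec (layerAct σ n W l x)) p) •
        ∑ q, W l p q • Dmap σ n W l x q

noncomputable def DDmap (σ : ℝ → ℝ) (n : ℕ → ℕ)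
    (W : ∀ l, Matrix (Fin (n (l + 1))) (Fin (n l)) ℝ) :
    ∀ l, (Fin (n 0) → ℝ) → Fin (n l) → (Fin (n 0) → ℝ) → ((Fin (n 0) → ℝ) →L[ℝ] ℝ)
  | 0 => fun _ _ _ => 0
  | l + 1 => fun x p v =>
      (deriv (deriv σ) (((W l).mulVec (layerAct σ n W l x)) p) *
          (∑ q, W l p q • Dmap σ n W l x q) v) • (∑ q, W l p q • Dmap σ n W l x q)
      + deriv σ (((W l).mulVec (layerAct σ n W l x)) p) •
          ∑ q, W l p q • DDmap σ n W l x q v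

/-- The recursive Hessian Frobenius bound. -/
noncomputable def CB (S₁ S₂ : ℝ) (fW : ℕ → ℝ) : ℕ → ℝ
  | 0 => 0
  | l + 1 => S₂ * (S₁^l * ∏ k ∈ Finset.range (l+1), fW k)^2 + S₁ * fW l * CB S₁ S₂ fW l

variable {σ : ℝ → ℝ} {n : ℕ → ℕ} {W : ∀ l, Matrix (Fin (n (l + 1))) (Fin (n l)) ℝ} {S₁ S₂ : ℝ}

lemma frobNorm_nonneg {m k : ℕ} (A : Matrix (Fin m) (Fin k) ℝ) : 0 ≤ frobNorm A :=
  Real.sqrt_nonneg _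

lemma frobNorm_sq {m k : ℕ} (A : Matrix (Fin m) (Fin k) ℝ) :
    frobNorm A ^ 2 = ∑ i, ∑ j, (A i j)^2 :=
  Real.sq_sqrt (Finset.sum_nonneg fun _ _ => Finset.sum_nonneg fun _ _ => sq_nonneg _)

lemma CB_nonneg (h1 : 0 ≤ S₁) (h2 : 0 ≤ S₂) (fW : ℕ → ℝ) (hfW : ∀ k, 0 ≤ fW k) :
    ∀ l, 0 ≤ CB S₁ S₂ fW l := by
  intro l
  induction l with
  | zero => simp [CB]
  | succ l ih =>
    rw [CB]
    exact add_nonneg (mul_nonneg h2 (sq_nonneg _))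
      (mul_nonneg (mul_nonneg h1 (hfW l)) ih)

lemma hasFDerivAt_layerAct (hσ : ∀ t, DifferentiableAt ℝ σ t) :
    ∀ (l) (x : Fin (n 0) → ℝ) (p : Fin (n l)),
      HasFDerivAt (fun y => layerAct σ n W l y p) (Dmap σ n W l x p) x := by
  intro l
  induction l with
  | zero =>
    intro x p
    exact (ContinuousLinearMap.proj p : (Fin (n 0) → ℝ) →L[ℝ] ℝ).hasFDerivAt
  | succ l ih =>
    intro x p
    have hz : HasFDerivAt (fun y => ((W l).mulVec (layerAct σ n W l y)) p)
        (∑ q, W l p q • Dmap σ n W l x q) x := by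
      have : (fun y => ((W l).mulVec (layerAct σ n W l y)) p)
          = fun y => ∑ q, W l p q * layerAct σ n W l y q := by
        funext y; simp [Matrix.mulVec, dotProduct]
      rw [this]
      exact HasFDerivAt.fun_sum fun q _ => (ih x q).const_mul (W l p q)
    exact ((hσ _).hasDerivAt.comp_hasFDerivAt x hz)

lemma hasFDerivAt_Dmap (hσ : ∀ t, DifferentiableAt ℝ σ t)
    (hσ' : ∀ t, DifferentiableAt ℝ (deriv σ) t) :
    ∀ (l) (x : Fin (n 0) → ℝ) (p : Fin (n l)) (v : Fin (n 0) → ℝ),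
      HasFDerivAt (fun y => Dmap σ n W l y p v) (DDmap σ n W l x p v) x := by
  intro l
  induction l with
  | zero =>
    intro x p v
    exact hasFDerivAt_const _ _
  | succ l ih =>
    intro x p v
    have hz : HasFDerivAt (fun y => ((W l).mulVec (layerAct σ n W l y)) p)
        (∑ q, W l p q • Dmap σ n W l x q) x := by
      have : (fun y => ((W l).mulVec (layerAct σ n W l y)) p)
          = fun y => ∑ q, W l p q * layerAct σ n W l y q := by
        funext y; simp [Matrix.mulVec, dotProduct]
      rw [this]
      exact HasFDerivAt.fun_sum fun q _ => ((hasFDerivAt_layerAct hσ l x q).const_mul (W l p q))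
    have hA : HasFDerivAt (fun y => deriv σ (((W l).mulVec (layerAct σ n W l y)) p))
        (deriv (deriv σ) (((W l).mulVec (layerAct σ n W l x)) p) •
          ∑ q, W l p q • Dmap σ n W l x q) x :=
      (hσ' _).hasDerivAt.comp_hasFDerivAt x hz
    have hB : HasFDerivAt (fun y => (∑ q, W l p q • Dmap σ n W l y q) v)
        (∑ q, W l p q • DDmap σ n W l x q v) x := by
      have : (fun y => (∑ q, W l p q • Dmap σ n W l y q : (Fin (n 0) → ℝ) →L[ℝ] ℝ) v)
          = fun y => ∑ q, W l p q * Dmap σ n W l y q v := by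
        funext y; simp [ContinuousLinearMap.sum_apply]
      rw [this]
      exact HasFDerivAt.fun_sum fun q _ => (ih x q v).const_mul (W l p q)
    have := hA.fun_mul hB
    have heq : (fun y => Dmap σ n W (l+1) y p v)
        = fun y => deriv σ (((W l).mulVec (layerAct σ n W l y)) p) *
            (∑ q, W l p q • Dmap σ n W l y q : (Fin (n 0) → ℝ) →L[ℝ] ℝ) v := by
      funext y; simp [Dmap]
    rw [heq]
    refine this.congr_fderiv (Eq.symm ?_)
    show DDmap σ n W (l+1) x p v = _
    rw [DDmap]
    module

lemma Mbound (hS₁ : ∀ t, |deriv σ t| ≤ S₁) :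
    ∀ (l) (x : Fin (n 0) → ℝ),
      (∑ p, ∑ i, ((∑ q, W l p q • Dmap σ n W l x q) (Pi.single i (1:ℝ)))^2)
        ≤ (S₁^l * ∏ k ∈ Finset.range (l+1), frobNorm (W k))^2 := by
  intro l
  induction l with
  | zero =>
    intro x
    have h : ∀ (p : Fin (n 1)) (i : Fin (n 0)),
        (∑ q, W 0 p q • Dmap σ n W 0 x q) (Pi.single i (1:ℝ)) = W 0 p i := by
      intro p i
      simp only [ContinuousLinearMap.sum_apply, ContinuousLinearMap.smul_apply, Dmap,
        ContinuousLinearMap.proj_apply, smul_eq_mul, Pi.single_apply]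
      simp [Finset.sum_ite_eq]
    simp only [h]
    rw [Finset.prod_range_one, pow_zero, one_mul, frobNorm_sq]
  | succ l ih =>
    intro x
    have hS₁0 : 0 ≤ S₁ := le_trans (abs_nonneg _) (hS₁ 0)
    set M : Fin (n (l+1)) → Fin (n 0) → ℝ :=
      fun q i => (∑ r, W l q r • Dmap σ n W l x r) (Pi.single i (1:ℝ)) with hM
    have happ : ∀ (p : Fin (n (l+2))) (i : Fin (n 0)),
        (∑ q, W (l+1) p q • Dmap σ n W (l+1) x q) (Pi.single i (1:ℝ))
          = ∑ q, W (l+1) p q *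
              (deriv σ (((W l).mulVec (layerAct σ n W l x)) q) * M q i) := by
      intro p i
      simp [Dmap, ContinuousLinearMap.sum_apply, ContinuousLinearMap.smul_apply, hM, mul_assoc]
    simp only [happ]
    have key : ∀ (p : Fin (n (l+2))) (i : Fin (n 0)),
        (∑ q, W (l+1) p q * (deriv σ (((W l).mulVec (layerAct σ n W l x)) q) * M q i))^2
          ≤ (∑ q, (W (l+1) p q)^2) *
            (∑ q, S₁^2 * (M q i)^2) := by
      intro p i
      calc (∑ q, W (l+1) p q * (deriv σ (((W l).mulVec (layerAct σ n W l x)) q) * M q i))^2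
          ≤ (∑ q, (W (l+1) p q)^2) *
            (∑ q, (deriv σ (((W l).mulVec (layerAct σ n W l x)) q) * M q i)^2) :=
            Finset.sum_mul_sq_le_sq_mul_sq _ _ _
        _ ≤ _ := by
            refine mul_le_mul_of_nonneg_left (Finset.sum_le_sum fun q _ => ?_)
              (Finset.sum_nonneg fun _ _ => sq_nonneg _)
            rw [mul_pow]
            refine mul_le_mul_of_nonneg_right ?_ (sq_nonneg _)
            rw [← sq_abs]
            exact pow_le_pow_left₀ (abs_nonneg _) (hS₁ _) 2
    calc ∑ p, ∑ i, (∑ q, W (l+1) p q * (deriv σ (((W l).mulVec (layerAct σ n W l x)) q) * M q i))^2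
        ≤ ∑ p, ∑ i : Fin (n 0), (∑ q, (W (l+1) p q)^2) * (∑ q, S₁^2 * (M q i)^2) :=
          Finset.sum_le_sum fun p _ => Finset.sum_le_sum fun i _ => key p i
      _ = (∑ p, ∑ q, (W (l+1) p q)^2) * (S₁^2 * ∑ q, ∑ i, (M q i)^2) := by
          rw [(Finset.sum_mul_sum _ _ _ _).symm]
          congr 1
          rw [Finset.sum_comm]
          rw [Finset.mul_sum]
          exact Finset.sum_congr rfl fun q _ => (Finset.mul_sum _ _ _).symm
      _ ≤ (∑ p, ∑ q, (W (l+1) p q)^2) * (S₁^2 * (S₁^l * ∏ k ∈ Finset.range (l+1), frobNorm (W k))^2) := by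
          refine mul_le_mul_of_nonneg_left (mul_le_mul_of_nonneg_left (ih x) (sq_nonneg _))
            (Finset.sum_nonneg fun _ _ => Finset.sum_nonneg fun _ _ => sq_nonneg _)
      _ = (S₁^(l+1) * ∏ k ∈ Finset.range (l+2), frobNorm (W k))^2 := by
          rw [← frobNorm_sq,
            Finset.prod_range_succ (f := fun k => frobNorm (W k)) (n := l+1)]
          ring

lemma Tbound (hσ : ∀ t, DifferentiableAt ℝ σ t)
    (hS₁ : ∀ t, |deriv σ t| ≤ S₁) (hS₂ : ∀ t, |deriv (deriv σ) t| ≤ S₂) :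
    ∀ (l) (x : Fin (n 0) → ℝ),
      Real.sqrt (∑ p, ∑ i, ∑ j,
          (DDmap σ n W l x p (Pi.single i (1:ℝ)) (Pi.single j (1:ℝ)))^2)
        ≤ CB S₁ S₂ (fun k => frobNorm (W k)) l := by
  have hS₁0 : 0 ≤ S₁ := le_trans (abs_nonneg _) (hS₁ 0)
  have hS₂0 : 0 ≤ S₂ := le_trans (abs_nonneg _) (hS₂ 0)
  intro l
  induction l with
  | zero =>
    intro x
    simp [DDmap, CB]
  | succ l ih =>
    intro x
    set M : Fin (n (l+1)) → Fin (n 0) → ℝ :=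
      fun q i => (∑ r, W l q r • Dmap σ n W l x r) (Pi.single i (1:ℝ)) with hM
    set DD : Fin (n l) → Fin (n 0) → Fin (n 0) → ℝ :=
      fun q i j => DDmap σ n W l x q (Pi.single i (1:ℝ)) (Pi.single j (1:ℝ)) with hDD
    set z : Fin (n (l+1)) → ℝ := fun p => ((W l).mulVec (layerAct σ n W l x)) p with hz
    have happ : ∀ (p : Fin (n (l+1))) (i j : Fin (n 0)),
        DDmap σ n W (l+1) x p (Pi.single i (1:ℝ)) (Pi.single j (1:ℝ))
          = deriv (deriv σ) (z p) * M p i * M p j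
            + deriv σ (z p) * ∑ q, W l p q * DD q i j := by
      intro p i j
      simp [DDmap, ContinuousLinearMap.add_apply, ContinuousLinearMap.smul_apply,
        ContinuousLinearMap.sum_apply, hM, hDD, hz, mul_assoc, Finset.mul_sum]
    simp only [happ]
    have tri := sqrt_sum_sq_add (Finset.univ : Finset (Fin (n (l+1)) × Fin (n 0) × Fin (n 0)))
        (fun t => deriv (deriv σ) (z t.1) * M t.1 t.2.1 * M t.1 t.2.2)
        (fun t => deriv σ (z t.1) * ∑ q, W l t.1 q * DD q t.2.1 t.2.2)
    rw [Fintype.sum_prod_type, Fintype.sum_prod_type, Fintype.sum_prod_type] at tri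
    simp only [Fintype.sum_prod_type] at tri
    refine le_trans tri ?_
    rw [CB]
    have hAbound : Real.sqrt (∑ p, ∑ i, ∑ j, (deriv (deriv σ) (z p) * M p i * M p j)^2)
        ≤ S₂ * (S₁^l * ∏ k ∈ Finset.range (l+1), frobNorm (W k))^2 := by
      have h1 : ∀ p : Fin (n (l+1)), ∑ i, ∑ j, (deriv (deriv σ) (z p) * M p i * M p j)^2
          ≤ (S₂ * ∑ i, (M p i)^2)^2 := by
        intro p
        have expand : ∑ i, ∑ j, (deriv (deriv σ) (z p) * M p i * M p j)^2
            = (deriv (deriv σ) (z p))^2 * (∑ i, (M p i)^2) * (∑ j, (M p j)^2) := by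
          have h : ∀ i : Fin (n 0), ∑ j, (deriv (deriv σ) (z p) * M p i * M p j)^2
              = ((deriv (deriv σ) (z p))^2 * (M p i)^2) * ∑ j, (M p j)^2 := by
            intro i
            rw [Finset.mul_sum]
            exact Finset.sum_congr rfl fun j _ => by ring
          simp only [h]
          rw [← Finset.sum_mul, ← Finset.mul_sum]
        rw [expand]
        have hM2 : (0:ℝ) ≤ ∑ i, (M p i)^2 := Finset.sum_nonneg fun _ _ => sq_nonneg _
        have hc : (deriv (deriv σ) (z p))^2 ≤ S₂^2 := by
          rw [← sq_abs]
          exact pow_le_pow_left₀ (abs_nonneg _) (hS₂ _) 2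
        calc (deriv (deriv σ) (z p))^2 * (∑ i, (M p i)^2) * (∑ j, (M p j)^2)
            ≤ S₂^2 * (∑ i, (M p i)^2) * (∑ j, (M p j)^2) := by
              exact mul_le_mul_of_nonneg_right (mul_le_mul_of_nonneg_right hc hM2) hM2
          _ = (S₂ * ∑ i, (M p i)^2)^2 := by ring
      calc Real.sqrt (∑ p, ∑ i, ∑ j, (deriv (deriv σ) (z p) * M p i * M p j)^2)
          ≤ Real.sqrt (∑ p, (S₂ * ∑ i, (M p i)^2)^2) :=
            Real.sqrt_le_sqrt (Finset.sum_le_sum fun p _ => h1 p)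
        _ ≤ ∑ p, S₂ * ∑ i, (M p i)^2 := by
            refine sqrt_sum_sq_le_sum _ _ fun p _ => ?_
            exact mul_nonneg hS₂0 (Finset.sum_nonneg fun _ _ => sq_nonneg _)
        _ = S₂ * ∑ p, ∑ i, (M p i)^2 := by rw [Finset.mul_sum]
        _ ≤ S₂ * (S₁^l * ∏ k ∈ Finset.range (l+1), frobNorm (W k))^2 :=
            mul_le_mul_of_nonneg_left (Mbound hS₁ l x) hS₂0
    have hBbound : Real.sqrt (∑ p, ∑ i, ∑ j, (deriv σ (z p) * ∑ q, W l p q * DD q i j)^2)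
        ≤ S₁ * frobNorm (W l) * CB S₁ S₂ (fun k => frobNorm (W k)) l := by
      have hT : ∑ q, ∑ i, ∑ j, (DD q i j)^2
          ≤ (CB S₁ S₂ (fun k => frobNorm (W k)) l)^2 := by
        have hnn : (0:ℝ) ≤ ∑ q, ∑ i, ∑ j, (DD q i j)^2 :=
          Finset.sum_nonneg fun _ _ => Finset.sum_nonneg fun _ _ =>
            Finset.sum_nonneg fun _ _ => sq_nonneg _
        have := ih x
        calc ∑ q, ∑ i, ∑ j, (DD q i j)^2
            = Real.sqrt (∑ q, ∑ i, ∑ j, (DD q i j)^2)^2 := (Real.sq_sqrt hnn).symm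
          _ ≤ (CB S₁ S₂ (fun k => frobNorm (W k)) l)^2 :=
              pow_le_pow_left₀ (Real.sqrt_nonneg _) (ih x) 2
      have key : ∑ p, ∑ i, ∑ j, (deriv σ (z p) * ∑ q, W l p q * DD q i j)^2
          ≤ (S₁ * frobNorm (W l) * CB S₁ S₂ (fun k => frobNorm (W k)) l)^2 := by
        have step1 : ∀ (p : Fin (n (l+1))) (i j : Fin (n 0)),
            (deriv σ (z p) * ∑ q, W l p q * DD q i j)^2
              ≤ S₁^2 * ((∑ q, (W l p q)^2) * ∑ q, (DD q i j)^2) := by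
          intro p i j
          rw [mul_pow]
          have h1 : (deriv σ (z p))^2 ≤ S₁^2 := by
            rw [← sq_abs]; exact pow_le_pow_left₀ (abs_nonneg _) (hS₁ _) 2
          have h2 : (∑ q, W l p q * DD q i j)^2
              ≤ (∑ q, (W l p q)^2) * ∑ q, (DD q i j)^2 :=
            Finset.sum_mul_sq_le_sq_mul_sq _ _ _
          exact mul_le_mul h1 h2 (sq_nonneg _) (sq_nonneg _)
        calc ∑ p, ∑ i, ∑ j, (deriv σ (z p) * ∑ q, W l p q * DD q i j)^2
            ≤ ∑ p, ∑ i : Fin (n 0), ∑ j : Fin (n 0),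
                S₁^2 * ((∑ q, (W l p q)^2) * ∑ q, (DD q i j)^2) :=
              Finset.sum_le_sum fun p _ => Finset.sum_le_sum fun i _ =>
                Finset.sum_le_sum fun j _ => step1 p i j
          _ = S₁^2 * (∑ p, ∑ q, (W l p q)^2) * (∑ i, ∑ j, ∑ q, (DD q i j)^2) := by
              have inner : ∀ p : Fin (n (l+1)),
                  ∑ i, ∑ j, S₁^2 * ((∑ q, (W l p q)^2) * ∑ q, (DD q i j)^2)
                    = (∑ q, (W l p q)^2) * (S₁^2 * ∑ i, ∑ j, ∑ q, (DD q i j)^2) := by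
                intro p
                simp only [Finset.mul_sum]
                exact Finset.sum_congr rfl fun i _ => Finset.sum_congr rfl fun j _ =>
                  Finset.sum_congr rfl fun q _ => by ring
              simp only [inner]
              rw [← Finset.sum_mul]
              ring
          _ = S₁^2 * frobNorm (W l)^2 * (∑ q, ∑ i, ∑ j, (DD q i j)^2) := by
              rw [frobNorm_sq]
              congr 1
              have h1 : ∀ i : Fin (n 0), ∑ j : Fin (n 0), ∑ q, (DD q i j)^2
                  = ∑ q, ∑ j : Fin (n 0), (DD q i j)^2 := fun i => Finset.sum_comm
              simp only [h1]
              exact Finset.sum_comm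
          _ ≤ S₁^2 * frobNorm (W l)^2 * (CB S₁ S₂ (fun k => frobNorm (W k)) l)^2 := by
              refine mul_le_mul_of_nonneg_left hT ?_
              positivity
          _ = (S₁ * frobNorm (W l) * CB S₁ S₂ (fun k => frobNorm (W k)) l)^2 := by ring
      calc Real.sqrt (∑ p, ∑ i, ∑ j, (deriv σ (z p) * ∑ q, W l p q * DD q i j)^2)
          ≤ Real.sqrt ((S₁ * frobNorm (W l) * CB S₁ S₂ (fun k => frobNorm (W k)) l)^2) :=
            Real.sqrt_le_sqrt key
        _ = S₁ * frobNorm (W l) * CB S₁ S₂ (fun k => frobNorm (W k)) l := by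
            exact Real.sqrt_sq (mul_nonneg (mul_nonneg hS₁0 (frobNorm_nonneg _))
              (CB_nonneg hS₁0 hS₂0 (fun k => frobNorm (W k)) (fun k => frobNorm_nonneg _) l))
    exact add_le_add hAbound hBbound

lemma CB_eq (S₁ S₂ : ℝ) (fW : ℕ → ℝ) :
    ∀ l, CB S₁ S₂ fW l
      = ∑ m ∈ Finset.Icc 1 l,
          ((∏ k ∈ Finset.range m, fW k ^ 2) * (∏ k ∈ Finset.Ico m l, fW k))
            * S₁ ^ (l + m - 2) * S₂ := by
  intro l
  induction l with
  | zero => simp [CB]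
  | succ l ih =>
    rw [CB, ih]
    rw [Finset.sum_Icc_succ_top (by omega : 1 ≤ l + 1)]
    have hnew : ((∏ k ∈ Finset.range (l+1), fW k ^ 2)
          * (∏ k ∈ Finset.Ico (l+1) (l+1), fW k)) * S₁ ^ (l + 1 + (l+1) - 2) * S₂
        = S₂ * (S₁^l * ∏ k ∈ Finset.range (l+1), fW k)^2 := by
      rw [Finset.Ico_self, Finset.prod_empty, Finset.prod_pow]
      have : l + 1 + (l + 1) - 2 = l * 2 := by omega
      rw [this, pow_mul]
      ring
    have hold : S₁ * fW l * ∑ m ∈ Finset.Icc 1 l,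
          ((∏ k ∈ Finset.range m, fW k ^ 2) * (∏ k ∈ Finset.Ico m l, fW k))
            * S₁ ^ (l + m - 2) * S₂
        = ∑ m ∈ Finset.Icc 1 l,
          ((∏ k ∈ Finset.range m, fW k ^ 2) * (∏ k ∈ Finset.Ico m (l+1), fW k))
            * S₁ ^ (l + 1 + m - 2) * S₂ := by
      rw [Finset.mul_sum]
      refine Finset.sum_congr rfl fun m hm => ?_
      obtain ⟨hm1, hm2⟩ := Finset.mem_Icc.mp hm
      rw [Finset.prod_Ico_succ_top hm2]
      have hexp : l + 1 + m - 2 = (l + m - 2) + 1 := by omega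
      rw [hexp, pow_succ]
      ring
    rw [hnew, hold]
    ring

/-- Theorem 1: for a fully-connected `L`-layer network `g` with scalar
output and twice differentiable activation `σ` with `|σ'| ≤ S₁`, `|σ''| ≤ S₂`,
the Frobenius norm of the Hessian of `g` is bounded by
`∑_{m=1}^L (∏_{l=1}^m ‖W^(l)‖_F² ∏_{l=m+1}^L ‖W^(l)‖_F) S₁^(L+m-2) S₂`.
(Here `W l` is the paper's `W^(l+1)`.) -/
theorem hessian_frobenius_bound_of_network
    (n : ℕ → ℕ) (L : ℕ) (hL : 0 < L) (hout : n L = 1)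
    (W : ∀ l, Matrix (Fin (n (l + 1))) (Fin (n l)) ℝ)
    (σ : ℝ → ℝ) (S₁ S₂ : ℝ)
    (hσ : ∀ t, DifferentiableAt ℝ σ t)
    (hσ' : ∀ t, DifferentiableAt ℝ (deriv σ) t)
    (hS₁ : ∀ t, |deriv σ t| ≤ S₁)
    (hS₂ : ∀ t, |deriv (deriv σ) t| ≤ S₂)
    (g : (Fin (n 0) → ℝ) → ℝ)
    (hg : ∀ x, g x = layerAct σ n W L x (Fin.cast hout.symm 0)) :
    ∀ x : Fin (n 0) → ℝ,
      Real.sqrt (∑ i : Fin (n 0), ∑ j : Fin (n 0),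
          (fderiv ℝ (fun y => fderiv ℝ g y (Pi.single j 1)) x (Pi.single i 1)) ^ 2)
        ≤ ∑ m ∈ Finset.Icc 1 L,
            ((∏ l ∈ Finset.range m, (frobNorm (W l)) ^ 2)
              * (∏ l ∈ Finset.Ico m L, frobNorm (W l)))
            * S₁ ^ (L + m - 2) * S₂ := by

  intro x
  set i₀ : Fin (n L) := Fin.cast hout.symm 0 with hi₀
  have hgfun : g = fun y => layerAct σ n W L y i₀ := funext hg
  have hfd : ∀ (y : Fin (n 0) → ℝ) (j : Fin (n 0)),
      fderiv ℝ g y (Pi.single j 1) = Dmap σ n W L y i₀ (Pi.single j 1) := by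
    intro y j
    rw [hgfun, (hasFDerivAt_layerAct hσ L y i₀).fderiv]
  have hfd2 : ∀ (i j : Fin (n 0)),
      fderiv ℝ (fun y => fderiv ℝ g y (Pi.single j 1)) x (Pi.single i 1)
        = DDmap σ n W L x i₀ (Pi.single j 1) (Pi.single i 1) := by
    intro i j
    have heq : (fun y => fderiv ℝ g y (Pi.single j 1))
        = fun y => Dmap σ n W L y i₀ (Pi.single j 1) := funext fun y => hfd y j
    rw [heq, (hasFDerivAt_Dmap hσ hσ' L x i₀ (Pi.single j 1)).fderiv]
  simp only [hfd2]
  have hswap : ∑ i : Fin (n 0), ∑ j : Fin (n 0),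
        (DDmap σ n W L x i₀ (Pi.single j 1) (Pi.single i 1))^2
      = ∑ i : Fin (n 0), ∑ j : Fin (n 0),
        (DDmap σ n W L x i₀ (Pi.single i 1) (Pi.single j 1))^2 := Finset.sum_comm
  rw [hswap]
  have hle : ∑ i : Fin (n 0), ∑ j : Fin (n 0),
        (DDmap σ n W L x i₀ (Pi.single i 1) (Pi.single j 1))^2
      ≤ ∑ p, ∑ i : Fin (n 0), ∑ j : Fin (n 0),
        (DDmap σ n W L x p (Pi.single i 1) (Pi.single j 1))^2 :=
    Finset.single_le_sum
      (f := fun p => ∑ i : Fin (n 0), ∑ j : Fin (n 0),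
        (DDmap σ n W L x p (Pi.single i 1) (Pi.single j 1))^2)
      (fun p _ => Finset.sum_nonneg fun _ _ => Finset.sum_nonneg fun _ _ => sq_nonneg _)
      (Finset.mem_univ i₀)
  calc Real.sqrt (∑ i : Fin (n 0), ∑ j : Fin (n 0),
        (DDmap σ n W L x i₀ (Pi.single i 1) (Pi.single j 1))^2)
      ≤ Real.sqrt (∑ p, ∑ i : Fin (n 0), ∑ j : Fin (n 0),
        (DDmap σ n W L x p (Pi.single i 1) (Pi.single j 1))^2) := Real.sqrt_le_sqrt hle
    _ ≤ CB S₁ S₂ (fun k => frobNorm (W k)) L := Tbound hσ hS₁ hS₂ L x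
    _ = _ := CB_eq S₁ S₂ _ L
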